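/- Suppose α_1,…,α_{ℓ−1} is a primitive stepsize schedule and let A_ℓ = Σ_{i=1}^{ℓ−1} α_i. Let f: ℝ^d → ℝ be convex, differentiable with 1-Lipschitz gradient, and possess a minimizer. Fix x_0 with g_0 = ∇f(x_0), let α ∈ [1, A_ℓ + 2), set x_1 = x_0 − α g_0, and run gradient descent x_{i+1} = x_i − α_i ∇f(x_i) for 1 ≤ i ≤ ℓ−1, writing f_i = f(x_i) and g_ℓ = ∇f(x_ℓ). Then f(x_0) − f(x_ℓ) ≥ ((A_ℓ + 3α − 2α²)/(2(A_ℓ + 2 − α)))·‖g_0‖² + ((2A_ℓ² + 3A_ℓ + α)/(2(A_ℓ + 2 − α)))·‖g_ℓ‖². -/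

import Mathlib

open Finset
open scoped RealInnerProductSpace

noncomputable section

/-- Gradient-descent trajectory along a finite list of stepsizes. -/
def gdIter {E : Type*} [AddCommGroup E] [SMul ℝ E] (g : E → E) : E → List ℝ → E
  | x, [] => x
  | x, a :: L => gdIter g (x - a • g x) L

/-- A finite stepsize schedule (of positive reals) is primitive if the key
gradient-descent inequality holds for every smooth convex problem instance. -/
def IsPrimitive (L : List ℝ) : Prop :=
  (∀ a ∈ L, (0:ℝ) < a) ∧
  ∀ (d : ℕ) (f : EuclideanSpace ℝ (Fin d) → ℝ)
    (g : EuclideanSpace ℝ (Fin d) → EuclideanSpace ℝ (Fin d)),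
    ConvexOn ℝ Set.univ f →
    (∀ y, HasGradientAt f (g y) y) →
    LipschitzWith 1 g →
    ∀ xstar : EuclideanSpace ℝ (Fin d), IsMinOn f Set.univ xstar →
    ∀ x1 : EuclideanSpace ℝ (Fin d),
      L.sum * (f (gdIter g x1 L) - f xstar)
        + (L.sum * (L.sum + 1) / 2) * ‖g (gdIter g x1 L)‖ ^ 2
        + 2⁻¹ * ‖gdIter g x1 L - xstar‖ ^ 2
      ≤ 2⁻¹ * ‖x1 - xstar‖ ^ 2
        + ∑ i : Fin L.length,
            L.get i *
              (f (gdIter g x1 (L.take i.1)) - f xstar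
                - ⟪g (gdIter g x1 (L.take i.1)), gdIter g x1 (L.take i.1) - xstar⟫
                + 2⁻¹ * ‖g (gdIter g x1 (L.take i.1))‖ ^ 2)

/-- The join-stepsize function. -/
def phi (x y : ℝ) : ℝ :=
  (-(x + y) + Real.sqrt ((x + y + 2) ^ 2 + 4 * (x + 1) * (y + 1))) / 2

/-- Concatenation of two stepsize schedules with the join stepsize in between. -/
def concatSched (s r : List ℝ) : List ℝ := s ++ phi s.sum r.sum :: r

/-- The silver stepsize schedules. -/
def silver : ℕ → List ℝ
  | 0 => []
  | i + 1 => concatSched (silver i) (silver i)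

/-- Recursive concatenation of a sequence of schedules. -/
def concatAll (s : ℕ → List ℝ) : ℕ → List ℝ
  | 0 => []
  | i + 1 => concatSched (concatAll s i) (s (i + 1))

/-- The number of copies of the `j`-th silver schedule. -/
def kSeq (c : ℝ) (j : ℕ) : ℕ := ⌊2 * (2:ℝ) ^ (c * j)⌋₊

def MSeq (c : ℝ) (j : ℕ) : ℕ := ∑ j' ∈ Finset.Icc 1 j, kSeq c j'

/-- The block index `j` of `i`, i.e. the `j` with `M_{j-1} < i ≤ M_j`. -/
def blockIdx (c : ℝ) (i : ℕ) : ℕ := sInf {j | i ≤ MSeq c j}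

/-- The partially concatenated schedules `ŝ_i`. -/
def shatSched (c : ℝ) : ℕ → List ℝ := concatAll fun i => silver (blockIdx c i)

/-- The `t`-th entry (1-indexed) of the infinite limiting schedule `ŝ`. -/
def shatEntry (c : ℝ) (t : ℕ) : ℝ := (shatSched c t).getD (t - 1) 0


section AuxiliaryLemmas

variable {E : Type*} [NormedAddCommGroup E] [InnerProductSpace ℝ E] [CompleteSpace E]
variable {f : E → ℝ} {g : E → E}

/-- Derivative of `f` along a line. -/
lemma line_hasDerivAt (hgrad : ∀ y, HasGradientAt f (g y) y) (x v : E) (t : ℝ) :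
    HasDerivAt (fun s : ℝ => f (x + s • v)) ⟪g (x + t • v), v⟫ t := by
  have hc : HasDerivAt (fun s : ℝ => x + s • v) v t := by
    simpa using ((hasDerivAt_id t).smul_const v).const_add x
  have hf := (hgrad (x + t • v)).hasFDerivAt
  have := hf.comp_hasDerivAt t hc
  simp at this; exact this

/-- Gradient inequality (convexity lower bound). -/
lemma grad_lower (hconv : ConvexOn ℝ Set.univ f)
    (hgrad : ∀ y, HasGradientAt f (g y) y) (x y : E) :
    f x + ⟪g x, y - x⟫ ≤ f y := by
  have hphi : ConvexOn ℝ Set.univ (fun s : ℝ => f (x + s • (y - x))) := by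
    have := hconv.comp_affineMap (AffineMap.lineMap x y : ℝ →ᵃ[ℝ] E)
    rw [Set.preimage_univ] at this
    refine this.congr (fun s _ => ?_)
    simp [Function.comp_def, AffineMap.lineMap_apply, add_comm]
  have hd : HasDerivAt (fun s : ℝ => f (x + s • (y - x))) ⟪g x, y - x⟫ 0 := by
    simpa using line_hasDerivAt hgrad x (y - x) 0
  have hs := hphi.le_slope_of_hasDerivAt (Set.mem_univ 0) (Set.mem_univ 1) one_pos hd
  simp [slope_def_field] at hs
  linarith [hs]

/-- Quadratic upper bound (descent lemma) for `1`-smooth `f`. -/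
lemma grad_upper (hgrad : ∀ y, HasGradientAt f (g y) y) (hlip : LipschitzWith 1 g) (x y : E) :
    f y ≤ f x + ⟪g x, y - x⟫ + 2⁻¹ * ‖y - x‖ ^ 2 := by
  set v := y - x with hv
  set psi : ℝ → ℝ := fun t => t * ⟪g x, v⟫ + t ^ 2 / 2 * ‖v‖ ^ 2 - f (x + t • v) with hpsi
  have hd : ∀ t : ℝ, HasDerivAt psi (⟪g x, v⟫ + t * ‖v‖ ^ 2 - ⟪g (x + t • v), v⟫) t := by
    intro t
    have h1 : HasDerivAt (fun t : ℝ => t * ⟪g x, v⟫ + t ^ 2 / 2 * ‖v‖ ^ 2)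
        (⟪g x, v⟫ + t * ‖v‖ ^ 2) t := by
      have := ((hasDerivAt_id t).mul_const (⟪g x, v⟫)).add
        (((hasDerivAt_pow 2 t).div_const 2).mul_const (‖v‖ ^ 2))
      exact this.congr_deriv (by norm_num)
    exact h1.sub (line_hasDerivAt hgrad x v t)
  have hmono : MonotoneOn psi (Set.Icc (0:ℝ) 1) := by
    apply monotoneOn_of_deriv_nonneg (convex_Icc 0 1)
    · exact fun t _ => ((hd t).differentiableAt).continuousAt.continuousWithinAt
    · intro t ht
      exact ((hd t).differentiableAt).differentiableWithinAt
    · intro t ht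
      rw [interior_Icc] at ht
      rw [(hd t).deriv]
      have hlipb : ‖g (x + t • v) - g x‖ ≤ t * ‖v‖ := by
        have := hlip.dist_le_mul (x + t • v) x
        simp only [dist_eq_norm, NNReal.coe_one, one_mul] at this
        calc ‖g (x + t • v) - g x‖ ≤ ‖x + t • v - x‖ := this
          _ = |t| * ‖v‖ := by simp [norm_smul]
          _ = t * ‖v‖ := by rw [abs_of_nonneg ht.1.le]
      have hib : ⟪g (x + t • v) - g x, v⟫ ≤ t * ‖v‖ * ‖v‖ :=
        le_trans (real_inner_le_norm _ _) (by nlinarith [norm_nonneg v])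
      have : ⟪g (x + t • v), v⟫ - ⟪g x, v⟫ ≤ t * ‖v‖ ^ 2 := by
        rw [← inner_sub_left]; nlinarith [hib]
      linarith
  have h01 := hmono (Set.mem_Icc.mpr ⟨le_refl 0, zero_le_one⟩)
    (Set.mem_Icc.mpr ⟨zero_le_one, le_refl 1⟩) zero_le_one
  simp only [hpsi] at h01
  norm_num at h01
  have hxy : x + v = y := by rw [hv]; abel
  rw [hxy] at h01
  linarith

/-- Co-coercivity of the gradient of a `1`-smooth convex function. -/
lemma cocoercive (hconv : ConvexOn ℝ Set.univ f)
    (hgrad : ∀ y, HasGradientAt f (g y) y) (hlip : LipschitzWith 1 g) (x y : E) :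
    f x + ⟪g x, y - x⟫ + 2⁻¹ * ‖g y - g x‖ ^ 2 ≤ f y := by
  set z := y - (g y - g x) with hz
  have h1 := grad_lower hconv hgrad x z
  have h2 := grad_upper hgrad hlip y z
  have e1 : ⟪g x, z - x⟫ = ⟪g x, y - x⟫ - ⟪g x, g y - g x⟫ := by
    rw [hz, ← inner_sub_right]; congr 1; abel
  have e2 : ⟪g y, z - y⟫ = -⟪g y, g y - g x⟫ := by
    rw [hz, ← inner_neg_right]; congr 1; abel
  have e3 : ‖z - y‖ ^ 2 = ‖g y - g x‖ ^ 2 := by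
    rw [hz]; congr 1; rw [show y - (g y - g x) - y = -(g y - g x) by abel, norm_neg]
  have e4 : ⟪g y, g y - g x⟫ - ⟪g x, g y - g x⟫ = ‖g y - g x‖ ^ 2 := by
    rw [← inner_sub_left, real_inner_self_eq_norm_sq]
  rw [e1] at h1
  rw [e2, e3] at h2
  linarith

/-- Gradient descent iterates as the start point minus the weighted gradient sum. -/
lemma gdIter_eq {F : Type*} [AddCommGroup F] [Module ℝ F] (g : F → F) :
    ∀ (L : List ℝ) (x : F),
      gdIter g x L = x - ∑ i : Fin L.length, L.get i • g (gdIter g x (L.take i.1)) := by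
  intro L
  induction L with
  | nil => intro x; simp [gdIter]
  | cons a L ih =>
    intro x
    show gdIter g (x - a • g x) L = _
    rw [ih (x - a • g x)]
    have hsum : (∑ i : Fin (a :: L).length,
          (a :: L).get i • g (gdIter g x (List.take (↑i) (a :: L))))
        = a • g x + ∑ i : Fin L.length, L.get i • g (gdIter g (x - a • g x) (L.take i.1)) := by
      show (∑ i : Fin (L.length + 1),
          (a :: L).get i • g (gdIter g x (List.take (↑i) (a :: L)))) = _
      rw [Fin.sum_univ_succ]
      congr 1
    rw [hsum]
    abel

/-- The key weighted-sum bound coming from co-coercivity towards `x0` and `xl`. -/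
lemma sum_bound {n : ℕ} (a : Fin n → ℝ) (G Y : Fin n → E) (fY : Fin n → ℝ)
    (f0 fl fs : ℝ) (x0 xl xs g0 gl : E)
    (ha : ∀ i, 0 ≤ a i)
    (hQ0 : ∀ i, fY i + ⟪G i, x0 - Y i⟫ + 2⁻¹ * ‖g0 - G i‖ ^ 2 ≤ f0)
    (hQl : ∀ i, fY i + ⟪G i, xl - Y i⟫ + 2⁻¹ * ‖gl - G i‖ ^ 2 ≤ fl) :
    ∑ i, a i * (2 * (fY i - fs - ⟪G i, Y i - xs⟫ + 2⁻¹ * ‖G i‖ ^ 2))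
      ≤ (∑ i, a i) * (f0 + fl - 2 * fs - 2⁻¹ * ‖g0‖ ^ 2 - 2⁻¹ * ‖gl‖ ^ 2)
        + ⟪∑ i, a i • G i, (2:ℝ) • xs - x0 - xl + g0 + gl⟫ := by
  have key : ∀ i, a i * (2 * (fY i - fs - ⟪G i, Y i - xs⟫ + 2⁻¹ * ‖G i‖ ^ 2))
      ≤ a i * ((f0 + fl - 2 * fs - 2⁻¹ * ‖g0‖ ^ 2 - 2⁻¹ * ‖gl‖ ^ 2)
        + ⟪G i, (2:ℝ) • xs - x0 - xl + g0 + gl⟫) := by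
    intro i
    apply mul_le_mul_of_nonneg_left _ (ha i)
    have e1 : ‖g0 - G i‖ ^ 2 = ‖g0‖ ^ 2 - 2 * ⟪G i, g0⟫ + ‖G i‖ ^ 2 := by
      rw [norm_sub_sq_real, real_inner_comm]
    have e2 : ‖gl - G i‖ ^ 2 = ‖gl‖ ^ 2 - 2 * ⟪G i, gl⟫ + ‖G i‖ ^ 2 := by
      rw [norm_sub_sq_real, real_inner_comm]
    have e3 : ⟪G i, (2:ℝ) • xs - x0 - xl + g0 + gl⟫
        = 2 * ⟪G i, xs⟫ - ⟪G i, x0⟫ - ⟪G i, xl⟫ + ⟪G i, g0⟫ + ⟪G i, gl⟫ := by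
      simp [inner_sub_right, inner_add_right, inner_smul_right]
    have e4 : ⟪G i, Y i - xs⟫ = ⟪G i, Y i⟫ - ⟪G i, xs⟫ := inner_sub_right _ _ _
    have e5 : ⟪G i, x0 - Y i⟫ = ⟪G i, x0⟫ - ⟪G i, Y i⟫ := inner_sub_right _ _ _
    have e6 : ⟪G i, xl - Y i⟫ = ⟪G i, xl⟫ - ⟪G i, Y i⟫ := inner_sub_right _ _ _
    have h0 := hQ0 i
    have h1 := hQl i
    rw [e1, e5] at h0
    rw [e2, e6] at h1
    rw [e3, e4]
    linarith
  calc ∑ i, a i * (2 * (fY i - fs - ⟪G i, Y i - xs⟫ + 2⁻¹ * ‖G i‖ ^ 2))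
      ≤ ∑ i, a i * ((f0 + fl - 2 * fs - 2⁻¹ * ‖g0‖ ^ 2 - 2⁻¹ * ‖gl‖ ^ 2)
        + ⟪G i, (2:ℝ) • xs - x0 - xl + g0 + gl⟫) := Finset.sum_le_sum (fun i _ => key i)
    _ = _ := by
      rw [sum_inner, Finset.sum_mul, ← Finset.sum_add_distrib]
      congr 1
      ext i
      rw [real_inner_smul_left]
      ring

end AuxiliaryLemmas

/-- descent lemma for a primitive schedule started from
`x₁ = x₀ − α·g₀` with `α ∈ [1, A_ℓ + 2)`. -/
theorem primitive_anchored_descent (L : List ℝ) (hL : IsPrimitive L)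
    (d : ℕ) (f : EuclideanSpace ℝ (Fin d) → ℝ)
    (g : EuclideanSpace ℝ (Fin d) → EuclideanSpace ℝ (Fin d))
    (hconv : ConvexOn ℝ Set.univ f)
    (hgrad : ∀ y, HasGradientAt f (g y) y)
    (hlip : LipschitzWith 1 g)
    (hmin : ∃ xstar, IsMinOn f Set.univ xstar)
    (x0 : EuclideanSpace ℝ (Fin d)) (α : ℝ) (hα1 : 1 ≤ α) (hα2 : α < L.sum + 2) :
    (L.sum + 3 * α - 2 * α ^ 2) / (2 * (L.sum + 2 - α)) * ‖g x0‖ ^ 2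
      + (2 * L.sum ^ 2 + 3 * L.sum + α) / (2 * (L.sum + 2 - α)) *
          ‖g (gdIter g (x0 - α • g x0) L)‖ ^ 2
    ≤ f x0 - f (gdIter g (x0 - α • g x0) L) := by
  obtain ⟨xs, hxs⟩ := hmin
  have hD : (0:ℝ) < 2 * (L.sum + 2 - α) := by linarith
  set x1 : EuclideanSpace ℝ (Fin d) := x0 - α • g x0 with hx1def
  set xl : EuclideanSpace ℝ (Fin d) := gdIter g x1 L with hxldef
  have hP := hL.2 d f g hconv hgrad hlip xs hxs x1
  rw [← hxldef] at hP
  have hS : (∑ i : Fin L.length, L.get i • g (gdIter g x1 (L.take i.1))) = x1 - xl := by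
    have h := gdIter_eq g L x1
    rw [← hxldef] at h
    rw [h]; abel
  have hA : (∑ i : Fin L.length, L.get i) = L.sum := by simp [List.get_eq_getElem]
  have hsumb : ∑ i : Fin L.length, L.get i *
        (2 * (f (gdIter g x1 (L.take i.1)) - f xs
          - ⟪g (gdIter g x1 (L.take i.1)), gdIter g x1 (L.take i.1) - xs⟫
          + 2⁻¹ * ‖g (gdIter g x1 (L.take i.1))‖ ^ 2))
      ≤ (∑ i : Fin L.length, L.get i) *
          (f x0 + f xl - 2 * f xs - 2⁻¹ * ‖g x0‖ ^ 2 - 2⁻¹ * ‖g xl‖ ^ 2)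
        + ⟪∑ i : Fin L.length, L.get i • g (gdIter g x1 (L.take i.1)),
            (2:ℝ) • xs - x0 - xl + g x0 + g xl⟫ :=
    sum_bound (fun i => L.get i) (fun i => g (gdIter g x1 (L.take i.1)))
      (fun i => gdIter g x1 (L.take i.1)) (fun i => f (gdIter g x1 (L.take i.1)))
      (f x0) (f xl) (f xs) x0 xl xs (g x0) (g xl)
      (fun i => (hL.1 _ (L.get_mem i)).le)
      (fun i => cocoercive hconv hgrad hlip _ x0)
      (fun i => cocoercive hconv hgrad hlip _ xl)
  rw [hS, hA] at hsumb
  have hdouble : ∑ i : Fin L.length, L.get i *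
        (2 * (f (gdIter g x1 (L.take i.1)) - f xs
          - ⟪g (gdIter g x1 (L.take i.1)), gdIter g x1 (L.take i.1) - xs⟫
          + 2⁻¹ * ‖g (gdIter g x1 (L.take i.1))‖ ^ 2))
      = 2 * ∑ i : Fin L.length, L.get i *
        (f (gdIter g x1 (L.take i.1)) - f xs
          - ⟪g (gdIter g x1 (L.take i.1)), gdIter g x1 (L.take i.1) - xs⟫
          + 2⁻¹ * ‖g (gdIter g x1 (L.take i.1))‖ ^ 2) := by
    rw [Finset.mul_sum]
    exact Finset.sum_congr rfl (fun i _ => by ring)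
  rw [hdouble] at hsumb
  have h3 := cocoercive hconv hgrad hlip xl x0
  have h4 := cocoercive hconv hgrad hlip x0 xl
  have h4' : (α - 1) * (f x0 + ⟪g x0, xl - x0⟫ + 2⁻¹ * ‖g xl - g x0‖ ^ 2 - f xl) ≤ 0 :=
    mul_nonpos_of_nonneg_of_nonpos (by linarith) (by linarith)
  have E1 : ‖x1 - xs‖ ^ 2
      = ‖x0 - xs‖ ^ 2 - 2 * (α * ⟪g x0, x0 - xs⟫) + α ^ 2 * ‖g x0‖ ^ 2 := by
    rw [show x1 - xs = (x0 - xs) - α • g x0 from by rw [hx1def]; abel]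
    rw [norm_sub_sq_real, real_inner_smul_right, norm_smul, real_inner_comm]
    simp [mul_pow, sq_abs]
  have E2 : ‖xl - xs‖ ^ 2 = ‖xl - x0‖ ^ 2 + 2 * ⟪xl - x0, x0 - xs⟫ + ‖x0 - xs‖ ^ 2 := by
    rw [show xl - xs = (xl - x0) + (x0 - xs) from by abel, norm_add_sq_real]
  have E3 : ⟪x1 - xl, (2:ℝ) • xs - x0 - xl + g x0 + g xl⟫
      = 2 * α * ⟪g x0, x0 - xs⟫ + α * ⟪g x0, xl - x0⟫ - α * ‖g x0‖ ^ 2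
        - α * ⟪g x0, g xl⟫ + 2 * ⟪xl - x0, x0 - xs⟫ + ‖xl - x0‖ ^ 2
        - ⟪g x0, xl - x0⟫ - ⟪g xl, xl - x0⟫ := by
    have ha' : x1 - xl = -(α • g x0 + (xl - x0)) := by rw [hx1def]; abel
    have hb' : (2:ℝ) • xs - x0 - xl + g x0 + g xl
        = -((2:ℝ) • (x0 - xs) + (xl - x0) - g x0 - g xl) := by
      module
    rw [ha', hb', inner_neg_neg]
    simp only [← real_inner_self_eq_norm_sq, inner_add_left, inner_add_right, inner_sub_left,
      inner_sub_right, real_inner_smul_left, real_inner_smul_right]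
    rw [real_inner_comm xl (g x0), real_inner_comm x0 (g x0), real_inner_comm xl (g xl),
      real_inner_comm x0 (g xl)]
    ring
  have E4 : ⟪g xl, x0 - xl⟫ = -⟪g xl, xl - x0⟫ := by
    rw [← inner_neg_right]; congr 1; abel
  have E5 : ‖g x0 - g xl‖ ^ 2 = ‖g x0‖ ^ 2 - 2 * ⟪g x0, g xl⟫ + ‖g xl‖ ^ 2 :=
    norm_sub_sq_real _ _
  have E6 : ‖g xl - g x0‖ ^ 2 = ‖g xl‖ ^ 2 - 2 * ⟪g x0, g xl⟫ + ‖g x0‖ ^ 2 := by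
    rw [norm_sub_sq_real, real_inner_comm]
  rw [E4, E5] at h3
  rw [E6] at h4'
  rw [E1, E2] at hP
  rw [E3] at hsumb
  rw [div_mul_eq_mul_div, div_mul_eq_mul_div, ← add_div, div_le_iff₀ hD]
  linarith [hP, hsumb, h3, h4']
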